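/- (Monotonic decrease of the total-Bregman f-separable objective under the generalized update; appendix theorem.) Let E be a real inner product space, φ: E → ℝ differentiable and strictly convex, c ≥ 0, and tBD(x, θ) = d_φ(θ, x)/√(1 + c²‖∇φ(x)‖²) with d_φ(θ, x) = φ(θ) − φ(x) − ⟨θ − x, ∇φ(x)⟩. Let f: [0, ∞) → ℝ be differentiable, monotone nondecreasing and concave. Let x_1, …, x_n ∈ E, θ ∈ E, and set weights w_i = f'(tBD(x_i, θ))/√(1 + c²‖∇φ(x_i)‖²) with Σ_i w_i > 0. Suppose θ̃ ∈ E satisfies the update condition (Σ_i w_i) ∇φ(θ̃) = Σ_i w_i ∇φ(x_i). Then Σ_{i=1}^n f(tBD(x_i, θ)) − Σ_{i=1}^n f(tBD(x_i, θ̃)) ≥ d_φ(θ, θ̃) · Σ_{i=1}^n w_i ≥ 0; in particular the update monotonically decreases the objective. -/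

import Mathlib

open scoped RealInnerProductSpace

/-- The Bregman divergence `d_φ(x, θ) = φ(x) − φ(θ) − ⟨x − θ, ∇φ(θ)⟩`. -/
noncomputable def bregman {E : Type*} [NormedAddCommGroup E] [InnerProductSpace ℝ E]
    [CompleteSpace E] (φ : E → ℝ) (x θ : E) : ℝ :=
  φ x - φ θ - ⟪x - θ, gradient φ θ⟫

/-- The total Bregman divergence
`tBD(x, θ) = d_φ(θ, x)/√(1 + c²‖∇φ(x)‖²)`. -/
noncomputable def tBD {E : Type*} [NormedAddCommGroup E] [InnerProductSpace ℝ E]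
    [CompleteSpace E] (φ : E → ℝ) (c : ℝ) (x θ : E) : ℝ :=
  bregman φ θ x / Real.sqrt (1 + c ^ 2 * ‖gradient φ x‖ ^ 2)

/-!
By concavity of `f`, each change `f(tBD(xᵢ, θ̃)) − f(tBD(xᵢ, θ))` is at most
`wᵢ (d_φ(θ̃, xᵢ) − d_φ(θ, xᵢ))`. The three-point identity
`d_φ(θ̃, x) − d_φ(θ, x) = ⟨θ − θ̃, ∇φ(x) − ∇φ(θ̃)⟩ − d_φ(θ, θ̃)` and the update condition, which
makes `∇φ(θ̃)` the `w`-weighted mean of the `∇φ(xᵢ)`, turn the sum of these bounds into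
`−d_φ(θ, θ̃) Σ wᵢ`; and `d_φ ≥ 0` because `φ` lies above its tangent planes.
-/

open Set

theorem ConcaveOn.sub_le_derivWithin_mul_sub {S : Set ℝ} {f : ℝ → ℝ} (hf : ConcaveOn ℝ S f)
    {a b : ℝ} (ha : a ∈ S) (hb : b ∈ S) (hfa : DifferentiableWithinAt ℝ f S a) :
    f b - f a ≤ derivWithin f S a * (b - a) := by
  rcases lt_trichotomy a b with hab | rfl | hba
  · have := hf.slope_le_derivWithin ha hb hab hfa
    rwa [slope_def_field, div_le_iff₀ (sub_pos.mpr hab)] at this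
  · simp
  · have := hf.derivWithin_le_slope hb ha hba hfa
    rw [slope_def_field, le_div_iff₀ (sub_pos.mpr hba)] at this
    linarith

section Bregman

variable {E : Type*} [NormedAddCommGroup E]

theorem ConvexOn.add_le_of_hasFDerivAt [NormedSpace ℝ E] {φ : E → ℝ} {φ' : E →L[ℝ] ℝ} {b : E}
    (hφ : ConvexOn ℝ univ φ) (hb : HasFDerivAt φ φ' b) (a : E) : φ b + φ' (a - b) ≤ φ a := by
  let line : ℝ →ᵃ[ℝ] E := AffineMap.lineMap b a
  have hline : HasDerivAt line (a - b) 0 := AffineMap.hasDerivAt_lineMap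
  have hderiv : HasDerivAt (φ ∘ line) (φ' (a - b)) 0 :=
    (by simpa [line] using hb : HasFDerivAt φ φ' (line 0)).comp_hasDerivAt 0 hline
  have hslope := (hφ.comp_affineMap line).le_slope_of_hasDerivAt
    (mem_univ 0) (mem_univ 1) one_pos hderiv
  simp only [slope_def_field, Function.comp_apply, line, AffineMap.lineMap_apply_zero,
    AffineMap.lineMap_apply_one, sub_zero, div_one] at hslope
  linarith

variable [InnerProductSpace ℝ E] [CompleteSpace E] {φ : E → ℝ}

theorem bregman_nonneg (hφ : ConvexOn ℝ univ φ) {b : E} (hb : DifferentiableAt ℝ φ b) (a : E) :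
    0 ≤ bregman φ a b := by
  have := hφ.add_le_of_hasFDerivAt hb.hasGradientAt.hasFDerivAt a
  rw [InnerProductSpace.toDual_apply_apply, real_inner_comm] at this
  rw [bregman]
  linarith

theorem tBD_nonneg (hφ : ConvexOn ℝ univ φ) (c : ℝ) {x : E} (hx : DifferentiableAt ℝ φ x)
    (θ : E) : 0 ≤ tBD φ c x θ :=
  div_nonneg (bregman_nonneg hφ hx θ) (Real.sqrt_nonneg _)

theorem bregman_sub_bregman (φ : E → ℝ) (θ θ' x : E) :
    bregman φ θ' x - bregman φ θ x =
      ⟪θ - θ', gradient φ x - gradient φ θ'⟫ - bregman φ θ θ' := by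
  simp only [bregman, inner_sub_left, inner_sub_right]
  ring

theorem sum_mul_bregman_sub_bregman {ι : Type*} (s : Finset ι) (w : ι → ℝ) (x : ι → E)
    (θ θ' : E) (h : (∑ i ∈ s, w i) • gradient φ θ' = ∑ i ∈ s, w i • gradient φ (x i)) :
    ∑ i ∈ s, w i * (bregman φ θ' (x i) - bregman φ θ (x i)) =
      -(bregman φ θ θ' * ∑ i ∈ s, w i) := by
  have hcross : ∑ i ∈ s, w i * ⟪θ - θ', gradient φ (x i) - gradient φ θ'⟫ = 0 := by
    simp_rw [← real_inner_smul_right, ← inner_sum, smul_sub, Finset.sum_sub_distrib,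
      ← Finset.sum_smul, h, sub_self, inner_zero_right]
  simp_rw [bregman_sub_bregman, mul_sub, Finset.sum_sub_distrib, hcross, ← Finset.sum_mul]
  ring

theorem ConcaveOn.sub_tBD_le (hφ : ConvexOn ℝ univ φ) (c : ℝ) {x : E}
    (hx : DifferentiableAt ℝ φ x) {f : ℝ → ℝ} (hf : ConcaveOn ℝ (Ici 0) f)
    (hfd : DifferentiableOn ℝ f (Ici 0)) (θ θ' : E) :
    f (tBD φ c x θ') - f (tBD φ c x θ) ≤
      derivWithin f (Ici 0) (tBD φ c x θ) / Real.sqrt (1 + c ^ 2 * ‖gradient φ x‖ ^ 2) *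
        (bregman φ θ' x - bregman φ θ x) := by
  have hθ := tBD_nonneg hφ c hx θ
  have := hf.sub_le_derivWithin_mul_sub hθ (tBD_nonneg hφ c hx θ') (hfd _ hθ)
  rw [tBD, tBD, div_sub_div_same] at this
  rwa [div_mul_eq_mul_div, mul_div_assoc]

end Bregman

theorem total_bregman_update_decreases_objective_general
    {E : Type*} [NormedAddCommGroup E] [InnerProductSpace ℝ E] [CompleteSpace E]
    (φ : E → ℝ) (hφdiff : Differentiable ℝ φ)
    (hφconv : StrictConvexOn ℝ Set.univ φ)
    (c : ℝ)
    (f : ℝ → ℝ) (hfdiff : DifferentiableOn ℝ f (Set.Ici 0))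
    (hfconc : ConcaveOn ℝ (Set.Ici 0) f)
    (n : ℕ) (x : Fin n → E) (θ : E)
    (w : Fin n → ℝ)
    (hw : ∀ i, w i = derivWithin f (Set.Ici 0) (tBD φ c (x i) θ) /
      Real.sqrt (1 + c ^ 2 * ‖gradient φ (x i)‖ ^ 2))
    (hwpos : 0 < ∑ i, w i)
    (θnew : E)
    (hθnew : (∑ i, w i) • gradient φ θnew = ∑ i, w i • gradient φ (x i)) :
    bregman φ θ θnew * ∑ i, w i ≤
      (∑ i, f (tBD φ c (x i) θ)) - ∑ i, f (tBD φ c (x i) θnew) ∧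
    0 ≤ bregman φ θ θnew * ∑ i, w i := by
  have hterm : ∀ i, f (tBD φ c (x i) θnew) - f (tBD φ c (x i) θ) ≤
      w i * (bregman φ θnew (x i) - bregman φ θ (x i)) := fun i => by
    rw [hw i]
    exact hfconc.sub_tBD_le hφconv.convexOn c (hφdiff _) hfdiff θ θnew
  have hsum := Finset.sum_le_sum fun i (_ : i ∈ Finset.univ) => hterm i
  rw [Finset.sum_sub_distrib, sum_mul_bregman_sub_bregman _ _ _ _ _ hθnew] at hsum
  exact ⟨by linarith, mul_nonneg (bregman_nonneg hφconv.convexOn (hφdiff θnew) θ) hwpos.le⟩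

/-- Monotonic decrease of the total-Bregman `f`-separable objective under the
generalized update: with weights `w_i = f'(tBD(x_i, θ))/√(1 + c²‖∇φ(x_i)‖²)`
and `θ̃` satisfying `(Σ_i w_i) ∇φ(θ̃) = Σ_i w_i ∇φ(x_i)`, the decrease of the
objective is at least `d_φ(θ, θ̃) · Σ_i w_i ≥ 0`. -/
theorem total_bregman_update_decreases_objective
    {E : Type*} [NormedAddCommGroup E] [InnerProductSpace ℝ E] [CompleteSpace E]
    (φ : E → ℝ) (hφdiff : Differentiable ℝ φ)
    (hφconv : StrictConvexOn ℝ Set.univ φ)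
    (c : ℝ) (hc : 0 ≤ c)
    (f : ℝ → ℝ) (hfdiff : DifferentiableOn ℝ f (Set.Ici 0))
    (hfmono : MonotoneOn f (Set.Ici 0)) (hfconc : ConcaveOn ℝ (Set.Ici 0) f)
    (n : ℕ) (x : Fin n → E) (θ : E)
    (w : Fin n → ℝ)
    (hw : ∀ i, w i = derivWithin f (Set.Ici 0) (tBD φ c (x i) θ) /
      Real.sqrt (1 + c ^ 2 * ‖gradient φ (x i)‖ ^ 2))
    (hwpos : 0 < ∑ i, w i)
    (θnew : E)
    (hθnew : (∑ i, w i) • gradient φ θnew = ∑ i, w i • gradient φ (x i)) :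
    bregman φ θ θnew * ∑ i, w i ≤
      (∑ i, f (tBD φ c (x i) θ)) - ∑ i, f (tBD φ c (x i) θnew) ∧
    0 ≤ bregman φ θ θnew * ∑ i, w i :=
  total_bregman_update_decreases_objective_general φ hφdiff hφconv c f hfdiff hfconc n x θ w hw
    hwpos θnew hθnew
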